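/- arXiv:2405.03979 — 5 statements merged into one kernel-verified Lean document; each statement's English description precedes it below -/
import Mathlib

section
/- Let F be a free group with normal subgroup R, and let f be the augmentation ideal of ℤ[F] and r = (R-1)ℤ[F] the relation ideal. Then r·f ∩ f³ = (r ∩ f²)·f. -/
/-- The augmentation homomorphism of the integral group ring `ℤ[G]`. -/
noncomputable def aug (G : Type*) [Group G] : MonoidAlgebra ℤ G →ₐ[ℤ] ℤ :=
  MonoidAlgebra.lift ℤ ℤ G 1

/-- The augmentation ideal of `ℤ[G]`, viewed as a `ℤ`-submodule of `ℤ[G]`. -/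
noncomputable def augIdeal (G : Type*) [Group G] : Submodule ℤ (MonoidAlgebra ℤ G) :=
  (RingHom.ker (aug G).toRingHom).restrictScalars ℤ

/-- The relation ideal `r = (R - 1)·ℤ[G]` associated to a (normal) subgroup `R ≤ G`,
viewed as a `ℤ`-submodule of `ℤ[G]`. -/
noncomputable def relIdeal (G : Type*) [Group G] (R : Subgroup G) :
    Submodule ℤ (MonoidAlgebra ℤ G) :=
  Submodule.span ℤ {x | ∃ ρ ∈ R, ∃ a : MonoidAlgebra ℤ G,
    x = (MonoidAlgebra.of ℤ G ρ - 1) * a}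
/-!
Fox calculus makes the augmentation ideal `f` of `ℤ[F]` a free left `ℤ[F]`-module on the
elements `x_a - 1`: every `w ∈ f` is `w = ∑ₐ ∂ₐw · (x_a - 1)`, and `∂ₐ(x u) = x · ∂ₐu` for
`u ∈ f`. Hence for a right ideal `A`, `w ∈ A·f` forces every `∂ₐw` into `A`, so
`A·f ∩ B·f = (A ∩ B)·f` for right ideals `A`, `B`. Take `A = r` and `B = f²`.
-/

open MonoidAlgebra

section Augmentation

variable {G : Type*} [Group G]

lemma aug_of (g : G) : aug G (of ℤ G g) = 1 := by
  simp [aug]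

lemma mem_augIdeal_iff {x : ℤ[G]} : x ∈ augIdeal G ↔ aug G x = 0 := Iff.rfl

lemma of_sub_one_mem_augIdeal (g : G) : of ℤ G g - 1 ∈ augIdeal G := by
  rw [mem_augIdeal_iff, map_sub, aug_of, map_one, sub_self]

lemma mul_augIdeal_le (A : Submodule ℤ ℤ[G]) : A * augIdeal G ≤ augIdeal G :=
  Submodule.mul_le.mpr fun a _ u hu => by
    rw [mem_augIdeal_iff, map_mul, mem_augIdeal_iff.mp hu, mul_zero]

lemma augIdeal_mul_top_le : augIdeal G * ⊤ ≤ augIdeal G :=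
  Submodule.mul_le.mpr fun u hu b _ => by
    rw [mem_augIdeal_iff, map_mul, mem_augIdeal_iff.mp hu, zero_mul]

lemma augIdeal_pow_mul_top_le (n : ℕ) : augIdeal G ^ (n + 1) * ⊤ ≤ augIdeal G ^ (n + 1) := by
  rw [pow_succ, mul_assoc]
  exact mul_le_mul' le_rfl augIdeal_mul_top_le

lemma relIdeal_mul_top_le (R : Subgroup G) : relIdeal G R * ⊤ ≤ relIdeal G R := by
  refine Submodule.mul_le.mpr fun x hx b _ => ?_
  induction hx using Submodule.span_induction with
  | mem y hy =>
    obtain ⟨ρ, hρ, a, rfl⟩ := hy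
    exact Submodule.subset_span ⟨ρ, hρ, a * b, mul_assoc ..⟩
  | zero => simp
  | add x y _ _ hx hy => simpa only [add_mul] using add_mem hx hy
  | smul c x _ hx => simpa only [smul_mul_assoc] using Submodule.smul_mem _ c hx

end Augmentation

section FoxCalculus

variable {α : Type*}

noncomputable def leftMulAut :
    FreeGroup α →* MulAut (Multiplicative (α →₀ ℤ[FreeGroup α])) where
  toFun g := AddEquiv.toMultiplicative
    (DistribMulAction.toAddEquiv _ ((of ℤ (FreeGroup α)).toHomUnits g))
  map_one' := by ext; simp
  map_mul' g h := by ext; simp [mul_smul]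

/-- The Fox derivatives of `g` are the first component of the image of `g` under the lift of
`x_a ↦ (e_a, x_a)`; the cocycle rule is the multiplication of the semidirect product. -/
noncomputable def foxLift :
    FreeGroup α →* Multiplicative (α →₀ ℤ[FreeGroup α]) ⋊[leftMulAut] FreeGroup α :=
  FreeGroup.lift fun a => ⟨.ofAdd (Finsupp.single a 1), FreeGroup.of a⟩

lemma foxLift_right (g : FreeGroup α) : (foxLift g).right = g := by
  have : SemidirectProduct.rightHom.comp foxLift = MonoidHom.id (FreeGroup α) :=
    FreeGroup.ext_hom _ _ fun a => by simp [foxLift]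
  exact DFunLike.congr_fun this g

noncomputable def foxCocycle (g : FreeGroup α) : α →₀ ℤ[FreeGroup α] :=
  (foxLift g).left.toAdd

lemma foxCocycle_of (a : α) : foxCocycle (FreeGroup.of a) = Finsupp.single a 1 := by
  simp [foxCocycle, foxLift]

lemma foxCocycle_mul (g h : FreeGroup α) :
    foxCocycle (g * h) = foxCocycle g + of ℤ _ g • foxCocycle h := by
  rw [foxCocycle, map_mul, SemidirectProduct.mul_left, toAdd_mul, foxLift_right]
  rfl

lemma foxCocycle_one : foxCocycle (1 : FreeGroup α) = 0 := by
  simp [foxCocycle]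

lemma foxCocycle_inv (g : FreeGroup α) : foxCocycle g⁻¹ = -(of ℤ _ g⁻¹ • foxCocycle g) := by
  refine eq_neg_of_add_eq_zero_left ?_
  rw [← foxCocycle_mul, inv_mul_cancel, foxCocycle_one]

variable (α) in
noncomputable def generatorCombination :
    (α →₀ ℤ[FreeGroup α]) →ₗ[ℤ[FreeGroup α]] ℤ[FreeGroup α] :=
  Finsupp.linearCombination _ fun a => of ℤ _ (FreeGroup.of a) - 1

lemma generatorCombination_single (a : α) (c : ℤ[FreeGroup α]) :
    generatorCombination α (Finsupp.single a c) = c * (of ℤ _ (FreeGroup.of a) - 1) := by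
  simp [generatorCombination]

lemma generatorCombination_foxCocycle (g : FreeGroup α) :
    generatorCombination α (foxCocycle g) = of ℤ _ g - 1 := by
  induction g using FreeGroup.induction_on with
  | C1 => rw [foxCocycle_one, map_zero, map_one, sub_self]
  | of a => rw [foxCocycle_of, generatorCombination_single, one_mul]
  | inv_of a ih =>
    rw [foxCocycle_inv, map_neg, map_smul, ih, smul_eq_mul, mul_sub, ← map_mul, inv_mul_cancel,
      map_one, mul_one, neg_sub]
  | mul g h ihg ihh =>
    rw [foxCocycle_mul, map_add, map_smul, ihg, ihh, smul_eq_mul, mul_sub, ← map_mul, mul_one]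
    abel

variable (α) in
/-- `foxDerivative α x a` is the Fox derivative `∂x/∂x_a`. -/
noncomputable def foxDerivative : ℤ[FreeGroup α] →ₗ[ℤ] α →₀ ℤ[FreeGroup α] :=
  (basis (FreeGroup α) ℤ).constr ℤ foxCocycle

lemma foxDerivative_of (g : FreeGroup α) : foxDerivative α (of ℤ _ g) = foxCocycle g :=
  (basis (FreeGroup α) ℤ).constr_basis ℤ _ g

lemma foxDerivative_mul (x y : ℤ[FreeGroup α]) :
    foxDerivative α (x * y) = aug _ y • foxDerivative α x + x • foxDerivative α y := by
  induction x using MonoidAlgebra.induction_on with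
  | of g =>
    induction y using MonoidAlgebra.induction_on with
    | of h => simp only [← map_mul, foxDerivative_of, foxCocycle_mul, aug_of, one_smul]
    | add y y' hy hy' => simp only [mul_add, map_add, hy, hy', add_smul, smul_add]; abel
    | smul c y hy => simp only [mul_smul_comm, map_zsmul, hy, smul_add, smul_comm _ c, smul_assoc]
  | add x x' hx hx' => simp only [add_mul, map_add, hx, hx', add_smul, smul_add]; abel
  | smul c x hx => simp only [smul_mul_assoc, map_zsmul, hx, smul_add, smul_comm _ c, smul_assoc]

lemma generatorCombination_foxDerivative (x : ℤ[FreeGroup α]) :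
    generatorCombination α (foxDerivative α x) = x - aug _ x • 1 := by
  induction x using MonoidAlgebra.induction_on with
  | of g => simp only [foxDerivative_of, generatorCombination_foxCocycle, aug_of, one_smul]
  | add x y hx hy => simp only [map_add, hx, hy, add_smul]; abel
  | smul c x hx => simp only [map_zsmul, hx, smul_sub, smul_assoc]

lemma foxDerivative_mul_of_mem_augIdeal (x : ℤ[FreeGroup α]) {u : ℤ[FreeGroup α]}
    (hu : u ∈ augIdeal _) : foxDerivative α (x * u) = x • foxDerivative α u := by
  rw [foxDerivative_mul, mem_augIdeal_iff.mp hu, zero_smul, zero_add]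

lemma eq_generatorCombination_foxDerivative {u : ℤ[FreeGroup α]} (hu : u ∈ augIdeal _) :
    u = generatorCombination α (foxDerivative α u) := by
  rw [generatorCombination_foxDerivative, mem_augIdeal_iff.mp hu, zero_smul, sub_zero]

lemma foxDerivative_apply_mem_of_mem_mul_augIdeal {A : Submodule ℤ ℤ[FreeGroup α]}
    (hA : A * ⊤ ≤ A) {w : ℤ[FreeGroup α]} (hw : w ∈ A * augIdeal _) (a : α) :
    foxDerivative α w a ∈ A := by
  refine Submodule.mul_induction_on hw (fun x hx u hu => ?_) fun x y hx hy => ?_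
  · rw [foxDerivative_mul_of_mem_augIdeal x hu, Finsupp.smul_apply, smul_eq_mul]
    exact hA (Submodule.mul_mem_mul hx Submodule.mem_top)
  · simpa only [map_add, Finsupp.add_apply] using add_mem hx hy

lemma mem_mul_augIdeal_of_foxDerivative_apply_mem {C : Submodule ℤ ℤ[FreeGroup α]}
    {w : ℤ[FreeGroup α]} (hw : w ∈ augIdeal _) (hC : ∀ a, foxDerivative α w a ∈ C) :
    w ∈ C * augIdeal _ := by
  rw [eq_generatorCombination_foxDerivative hw, generatorCombination,
    Finsupp.linearCombination_apply]
  exact Submodule.sum_mem _ fun a _ =>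
    Submodule.mul_mem_mul (hC a) (of_sub_one_mem_augIdeal _)

theorem mul_augIdeal_inf_mul_augIdeal {A B : Submodule ℤ ℤ[FreeGroup α]} (hA : A * ⊤ ≤ A)
    (hB : B * ⊤ ≤ B) : A * augIdeal _ ⊓ B * augIdeal _ = (A ⊓ B) * augIdeal _ := by
  refine le_antisymm (fun w ⟨hwA, hwB⟩ => ?_) (le_inf (mul_le_mul' inf_le_left le_rfl)
    (mul_le_mul' inf_le_right le_rfl))
  exact mem_mul_augIdeal_of_foxDerivative_apply_mem (mul_augIdeal_le A hwA) fun a =>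
    ⟨foxDerivative_apply_mem_of_mem_mul_augIdeal hA hwA a,
      foxDerivative_apply_mem_of_mem_mul_augIdeal hB hwB a⟩

end FoxCalculus

theorem relIdeal_mul_aug_inf_cube_general (α : Type*) (R : Subgroup (FreeGroup α)) :
    relIdeal (FreeGroup α) R * augIdeal (FreeGroup α) ⊓ augIdeal (FreeGroup α) ^ 3 =
      (relIdeal (FreeGroup α) R ⊓ augIdeal (FreeGroup α) ^ 2) * augIdeal (FreeGroup α) := by
  rw [pow_succ]
  exact mul_augIdeal_inf_mul_augIdeal (relIdeal_mul_top_le R) (augIdeal_pow_mul_top_le 1)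

/-- For a free group `F` with normal subgroup `R`: `r·f ∩ f³ = (r ∩ f²)·f`. -/
theorem relIdeal_mul_aug_inf_cube (α : Type*) (R : Subgroup (FreeGroup α)) [R.Normal] :
    relIdeal (FreeGroup α) R * augIdeal (FreeGroup α) ⊓ augIdeal (FreeGroup α) ^ 3 =
      (relIdeal (FreeGroup α) R ⊓ augIdeal (FreeGroup α) ^ 2) * augIdeal (FreeGroup α) :=
  relIdeal_mul_aug_inf_cube_general α R
end

section
/- Let F be a free group with normal subgroup R and G = F/R. There is a natural short exact sequence 0 → ([[R,F],F]γ_4(F))/([R,F']γ_4(F)) → γ_3(F)/([R,F']γ_4(F)) → L³(G_ab) → 0, where L³(G_ab) ≅ γ_3(F)/([[R,F],F]γ_4(F)) is the third Lie power of the abelianization of G. -/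
/-!
By the three subgroups lemma, `[R,F'] = [R,[F,F]]` lies in the normal subgroup `[[R,F],F]`,
since the other two rotations `[[F,R],F]` and `[[R,F],F]` do. Hence `[R,F']γ₄(F) ≤ [[R,F],F]γ₄(F)`,
the identity of `F` induces `F/[R,F']γ₄(F) → F/[[R,F],F]γ₄(F)` with kernel the image of
`[[R,F],F]γ₄(F)`, and its restriction to the images of `γ₃(F)` is onto.
-/

namespace Subgroup

variable {G : Type*} [Group G]

theorem commutator_commutator_le_of_rotate {H₁ H₂ H₃ N : Subgroup G} [N.Normal]
    (h₁ : ⁅⁅H₂, H₃⁆, H₁⁆ ≤ N) (h₂ : ⁅⁅H₃, H₁⁆, H₂⁆ ≤ N) : ⁅⁅H₁, H₂⁆, H₃⁆ ≤ N := by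
  simp only [← QuotientGroup.ker_mk' N, ← map_eq_bot_iff, map_commutator] at h₁ h₂ ⊢
  exact commutator_commutator_eq_bot_of_rotate h₁ h₂

theorem commutator_commutator_le_commutator_commutator_top (R : Subgroup G) [R.Normal] :
    ⁅R, _root_.commutator G⁆ ≤ ⁅⁅R, (⊤ : Subgroup G)⁆, ⊤⁆ := by
  rw [_root_.commutator_def, commutator_comm]
  exact commutator_commutator_le_of_rotate (by rw [commutator_comm ⊤ R]) le_rfl

end Subgroup

namespace QuotientGroup

variable {G : Type*} [Group G] {N N' : Subgroup G} [N.Normal] [N'.Normal]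
  (hNN' : N ≤ N') (H : Subgroup G)

theorem map_map_id_mk' :
    (H.map (mk' N)).map (map N N' (MonoidHom.id G) hNN') = H.map (mk' N') := by
  rw [Subgroup.map_map]
  rfl

def mapImage : H.map (mk' N) →* H.map (mk' N') :=
  (MulEquiv.subgroupCongr (map_map_id_mk' hNN' H) : _ →* _).comp
    ((map N N' (MonoidHom.id G) hNN').subgroupMap (H.map (mk' N)))

theorem mapImage_surjective : Function.Surjective (mapImage hNN' H) :=
  (MulEquiv.subgroupCongr (map_map_id_mk' hNN' H)).surjective.comp
    (MonoidHom.subgroupMap_surjective _ _)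

theorem coe_mapImage_mk {w : G} (hw : w ∈ H) :
    (mapImage hNN' H ⟨mk' N w, Subgroup.mem_map_of_mem _ hw⟩ : G ⧸ N') = mk' N' w :=
  rfl

theorem ker_mapImage : (mapImage hNN' H).ker = (N'.map (mk' N)).subgroupOf (H.map (mk' N)) := by
  rw [mapImage, MonoidHom.ker_mulEquiv_comp, Subgroup.ker_subgroupMap]
  exact congrArg (Subgroup.subgroupOf · _) (ker_map N N' (MonoidHom.id G) hNN')

end QuotientGroup

/-- There is a natural short exact sequence
`0 → [[R,F],F]γ_4(F)/([R,F']γ_4(F)) → γ_3(F)/([R,F']γ_4(F)) → L³(G_ab) → 0`,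
where `L³(G_ab) = γ_3(F)/([[R,F],F]γ_4(F))` is the third Lie power of `G_ab`.
The middle and right groups are realized as images of `γ_3(F)` in the quotients of `F`
by `N = [R,F']γ_4(F)` resp. `N' = [[R,F],F]γ_4(F)`, and the sequence is encoded by a
surjection `φ` (induced by the identity of `F`) whose kernel is the image of
`[[R,F],F]γ_4(F)` in `F/N`. -/
theorem lie_cube_ses (α : Type*) (R : Subgroup (FreeGroup α)) [R.Normal] :
    ∃ φ : ↥(Subgroup.map
            (QuotientGroup.mk'
              (⁅R, commutator (FreeGroup α)⁆ ⊔ (⊤ : Subgroup (FreeGroup α)).lowerCentralSeries 3))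
            ((⊤ : Subgroup (FreeGroup α)).lowerCentralSeries 2)) →*
          ↥(Subgroup.map
            (QuotientGroup.mk'
              (⁅⁅R, (⊤ : Subgroup (FreeGroup α))⁆, ⊤⁆ ⊔ (⊤ : Subgroup (FreeGroup α)).lowerCentralSeries 3))
            ((⊤ : Subgroup (FreeGroup α)).lowerCentralSeries 2)),
      Function.Surjective φ ∧
      (∀ (w : FreeGroup α) (hw : w ∈ (⊤ : Subgroup (FreeGroup α)).lowerCentralSeries 2),
          (φ ⟨QuotientGroup.mk'
                (⁅R, commutator (FreeGroup α)⁆ ⊔ (⊤ : Subgroup (FreeGroup α)).lowerCentralSeries 3) w,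
              Subgroup.mem_map_of_mem _ hw⟩ :
            FreeGroup α ⧸
              (⁅⁅R, (⊤ : Subgroup (FreeGroup α))⁆, ⊤⁆ ⊔ (⊤ : Subgroup (FreeGroup α)).lowerCentralSeries 3)) =
            QuotientGroup.mk'
              (⁅⁅R, (⊤ : Subgroup (FreeGroup α))⁆, ⊤⁆ ⊔ (⊤ : Subgroup (FreeGroup α)).lowerCentralSeries 3) w) ∧
      φ.ker = (Subgroup.map
          (QuotientGroup.mk'
            (⁅R, commutator (FreeGroup α)⁆ ⊔ (⊤ : Subgroup (FreeGroup α)).lowerCentralSeries 3))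
          (⁅⁅R, (⊤ : Subgroup (FreeGroup α))⁆, ⊤⁆ ⊔ (⊤ : Subgroup (FreeGroup α)).lowerCentralSeries 3)).subgroupOf
        (Subgroup.map
          (QuotientGroup.mk'
            (⁅R, commutator (FreeGroup α)⁆ ⊔ (⊤ : Subgroup (FreeGroup α)).lowerCentralSeries 3))
          ((⊤ : Subgroup (FreeGroup α)).lowerCentralSeries 2)) := by
  have hNN' := sup_le_sup_right R.commutator_commutator_le_commutator_commutator_top
    ((⊤ : Subgroup (FreeGroup α)).lowerCentralSeries 3)
  exact ⟨QuotientGroup.mapImage hNN' _, QuotientGroup.mapImage_surjective hNN' _,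
    fun _ hw => QuotientGroup.coe_mapImage_mk hNN' _ hw, QuotientGroup.ker_mapImage hNN' _⟩
end

section
/- Let C be a small category, F : C → Grp a functor, and G ⊆ F a subfunctor. For x ∈ Lim(F/G) ⊆ ∏_c F(c)/G(c) and any preimage x̄ ∈ ∏_c F(c), the family d(x̄)(α) = x̄(cod(α))⁻¹ · F(α)(x̄(dom(α))) is a 1-cocycle with values in G; moreover if x̄, x̃ are two preimages of x then d(x̄) and d(x̃) lie in the same orbit under the action of ∏_c G(c), so the connecting map δ : Lim(F/G) → Lim¹(G) = Z¹(C,G)/∏_c G(c) is well defined. -/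
open CategoryTheory

namespace CategoryTheory.Functor

variable {C : Type*} [Category C] (F : C ⥤ GrpCat) (x : ∀ c : C, F.obj c)

def coboundary ⦃c d : C⦄ (α : c ⟶ d) : F.obj d :=
  (x d)⁻¹ * F.map α (x c)

theorem coboundary_comp ⦃b c d : C⦄ (β : b ⟶ c) (α : c ⟶ d) :
    F.coboundary x (β ≫ α) = F.coboundary x α * F.map α (F.coboundary x β) := by
  simp [coboundary, F.map_comp, map_mul, mul_assoc]

theorem coboundary_mul (y : ∀ c : C, F.obj c) ⦃c d : C⦄ (α : c ⟶ d) :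
    F.coboundary (fun c => x c * y c) α = (y d)⁻¹ * F.coboundary x α * F.map α (y c) := by
  simp [coboundary, map_mul, mul_assoc]

end CategoryTheory.Functor

theorem connecting_cocycle_well_defined_general {C : Type*} [SmallCategory C] (F : C ⥤ GrpCat)
    (S : ∀ c : C, Subgroup (F.obj c))
    (x : ∀ c : C, F.obj c)
    (hx : ∀ ⦃c d : C⦄ (α : c ⟶ d), (x d)⁻¹ * F.map α (x c) ∈ S d) :
    -- `d(x̄)` has values in `G` and satisfies the 1-cocycle identity
    ((∀ ⦃c d : C⦄ (α : c ⟶ d), (x d)⁻¹ * F.map α (x c) ∈ S d) ∧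
      ∀ ⦃b c d : C⦄ (β : b ⟶ c) (α : c ⟶ d),
        (x d)⁻¹ * F.map (β ≫ α) (x b) =
          ((x d)⁻¹ * F.map α (x c)) * F.map α ((x c)⁻¹ * F.map β (x b))) ∧
    -- any two preimages of the same element of `Lim(F/G)` give cocycles in the same orbit
    ∀ x' : ∀ c : C, F.obj c, (∀ c : C, (x c)⁻¹ * x' c ∈ S c) →
      ∃ y : ∀ c : C, F.obj c, (∀ c : C, y c ∈ S c) ∧
        ∀ ⦃c d : C⦄ (α : c ⟶ d),
          (x' d)⁻¹ * F.map α (x' c) =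
            (y d)⁻¹ * ((x d)⁻¹ * F.map α (x c)) * F.map α (y c) := by
  refine ⟨⟨hx, F.coboundary_comp x⟩, fun x' hx' => ⟨fun c => (x c)⁻¹ * x' c, hx', ?_⟩⟩
  intro c d α
  have h := F.coboundary_mul x (fun c => (x c)⁻¹ * x' c) α
  simp only [mul_inv_cancel_left] at h
  exact h

/-- Let `G ⊆ F` be a subfunctor (given by subgroups `S c ≤ F(c)` compatible with the maps).
For an element of `Lim(F/G)` represented by a family `x̄ ∈ ∏_c F(c)` compatible modulo `S`,
the family `d(x̄)(α) = x̄(cod α)⁻¹ · F(α)(x̄(dom α))` is a 1-cocycle with values in `G`;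
moreover any two preimages yield cocycles in the same orbit of `∏_c G(c)`, so the connecting
map `δ : Lim(F/G) → Lim¹(G)` is well defined. -/
theorem connecting_cocycle_well_defined {C : Type*} [SmallCategory C] (F : C ⥤ GrpCat)
    (S : ∀ c : C, Subgroup (F.obj c))
    (hS : ∀ ⦃c d : C⦄ (α : c ⟶ d), ∀ g ∈ S c, F.map α g ∈ S d)
    (x : ∀ c : C, F.obj c)
    (hx : ∀ ⦃c d : C⦄ (α : c ⟶ d), (x d)⁻¹ * F.map α (x c) ∈ S d) :
    -- `d(x̄)` has values in `G` and satisfies the 1-cocycle identity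
    ((∀ ⦃c d : C⦄ (α : c ⟶ d), (x d)⁻¹ * F.map α (x c) ∈ S d) ∧
      ∀ ⦃b c d : C⦄ (β : b ⟶ c) (α : c ⟶ d),
        (x d)⁻¹ * F.map (β ≫ α) (x b) =
          ((x d)⁻¹ * F.map α (x c)) * F.map α ((x c)⁻¹ * F.map β (x b))) ∧
    -- any two preimages of the same element of `Lim(F/G)` give cocycles in the same orbit
    ∀ x' : ∀ c : C, F.obj c, (∀ c : C, (x c)⁻¹ * x' c ∈ S c) →
      ∃ y : ∀ c : C, F.obj c, (∀ c : C, y c ∈ S c) ∧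
        ∀ ⦃c d : C⦄ (α : c ⟶ d),
          (x' d)⁻¹ * F.map α (x' c) =
            (y d)⁻¹ * ((x d)⁻¹ * F.map α (x c)) * F.map α (y c) :=
  connecting_cocycle_well_defined_general F S x hx
end

section
/- Let C be a small category, F : C → Grp a functor, and G ⊆ F a subfunctor that is central, i.e., G(c) is contained in the center of F(c) for all c. Then the connecting map δ : Lim(F/G) → Lim¹(G) is a group homomorphism. -/
/-! Centrality makes the connecting cocycle multiplicative on the nose,
`d(x₁·x₂) = d(x₁)·d(x₂)`, so the trivial element of `∏_c G(c)` witnesses the equivalence. -/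

open CategoryTheory

theorem inv_mul_mul_mul_eq_of_inv_mul_mem_center {M : Type*} [Group M] {a b a' b' : M}
    (h : a⁻¹ * a' ∈ Subgroup.center M) :
    (a * b)⁻¹ * (a' * b') = (a⁻¹ * a') * (b⁻¹ * b') := by
  have hcomm : b⁻¹ * (a⁻¹ * a') = (a⁻¹ * a') * b⁻¹ := Subgroup.mem_center_iff.mp h b⁻¹
  calc (a * b)⁻¹ * (a' * b') = b⁻¹ * (a⁻¹ * a') * b' := by group
    _ = (a⁻¹ * a') * (b⁻¹ * b') := by rw [hcomm, mul_assoc]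

theorem connecting_map_hom_of_central_general {C : Type*} [SmallCategory C] (F : C ⥤ GrpCat)
    (S : ∀ c : C, Subgroup (F.obj c))
    (hcentral : ∀ c : C, S c ≤ Subgroup.center (F.obj c))
    (x₁ x₂ : ∀ c : C, F.obj c)
    (hx₁ : ∀ ⦃c d : C⦄ (α : c ⟶ d), (x₁ d)⁻¹ * F.map α (x₁ c) ∈ S d) :
    ∃ y : ∀ c : C, F.obj c, (∀ c : C, y c ∈ S c) ∧
      ∀ ⦃c d : C⦄ (α : c ⟶ d),
        (x₁ d * x₂ d)⁻¹ * F.map α (x₁ c * x₂ c) =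
          (y d)⁻¹ *
            (((x₁ d)⁻¹ * F.map α (x₁ c)) * ((x₂ d)⁻¹ * F.map α (x₂ c))) *
            F.map α (y c) := by
  refine ⟨1, fun c => (S c).one_mem, fun c d α => ?_⟩
  simp only [Pi.one_apply, inv_one, one_mul, map_one, mul_one, map_mul]
  exact inv_mul_mul_mul_eq_of_inv_mul_mem_center (hcentral d (hx₁ α))

/-- If `G ⊆ F` is a central subfunctor (each `S c` is contained in the center of `F(c)`),
then the connecting map `δ : Lim(F/G) → Lim¹(G)` is a group homomorphism: for any two
elements of `Lim(F/G)`, represented by families `x₁, x₂` compatible modulo `S` (their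
product being represented by the pointwise product `x₁·x₂`), the cocycle `d(x₁·x₂)`
is equivalent, under the action of `∏_c G(c)`, to the product cocycle `d(x₁)·d(x₂)`. -/
theorem connecting_map_hom_of_central {C : Type*} [SmallCategory C] (F : C ⥤ GrpCat)
    (S : ∀ c : C, Subgroup (F.obj c))
    (hS : ∀ ⦃c d : C⦄ (α : c ⟶ d), ∀ g ∈ S c, F.map α g ∈ S d)
    (hcentral : ∀ c : C, S c ≤ Subgroup.center (F.obj c))
    (x₁ x₂ : ∀ c : C, F.obj c)
    (hx₁ : ∀ ⦃c d : C⦄ (α : c ⟶ d), (x₁ d)⁻¹ * F.map α (x₁ c) ∈ S d)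
    (hx₂ : ∀ ⦃c d : C⦄ (α : c ⟶ d), (x₂ d)⁻¹ * F.map α (x₂ c) ∈ S d) :
    ∃ y : ∀ c : C, F.obj c, (∀ c : C, y c ∈ S c) ∧
      ∀ ⦃c d : C⦄ (α : c ⟶ d),
        (x₁ d * x₂ d)⁻¹ * F.map α (x₁ c * x₂ c) =
          (y d)⁻¹ *
            (((x₁ d)⁻¹ * F.map α (x₁ c)) * ((x₂ d)⁻¹ * F.map α (x₂ c))) *
            F.map α (y c) :=
  connecting_map_hom_of_central_general F S hcentral x₁ x₂ hx₁
end

section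
/- Let C be a small category, F : C → Grp a functor, and G ⊆ F a subfunctor. Then the sequence of pointed sets 1 → Lim(G) → Lim(F) → Lim(F/G) → Lim¹(G) → Lim¹(F) is exact, where exactness at each term means the kernel (preimage of the basepoint) equals the image of the previous map. -/
open CategoryTheory

universe u

variable {C : Type u} [SmallCategory C]

/-- The set `Z¹(C,F)` of 1-cocycles of a small category `C` with coefficients in a
functor `F : C → Grp`. -/
def Cocycle (F : C ⥤ GrpCat.{u}) : Type u :=
  {a : ∀ ⦃c d : C⦄, (c ⟶ d) → F.obj d //
    ∀ ⦃b c d : C⦄ (β : b ⟶ c) (α : c ⟶ d), a (β ≫ α) = a α * F.map α (a β)}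

/-- Two 1-cocycles are equivalent if they differ by the action of `∏_c F(c)`. -/
def cocycleEquiv (F : C ⥤ GrpCat.{u}) (a a' : Cocycle F) : Prop :=
  ∃ x : ∀ c : C, F.obj c, ∀ ⦃c d : C⦄ (α : c ⟶ d),
    a'.1 α = (x d)⁻¹ * a.1 α * F.map α (x c)

/-- The pointed set `Lim¹ F = Z¹(C,F)/∏_c F(c)`. -/
def Lim1 (F : C ⥤ GrpCat.{u}) : Type u := Quot (cocycleEquiv F)

/-- The trivial 1-cocycle. -/
def oneCocycle (F : C ⥤ GrpCat.{u}) : Cocycle F :=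
  ⟨fun _ _ _ => 1, by intros; simp⟩
/-- 1-cocycles with values in a subfunctor given by subgroups `S c ≤ F(c)`. -/
def SubCocycle (F : C ⥤ GrpCat.{u}) (S : ∀ c : C, Subgroup (F.obj c)) : Type u :=
  {a : ∀ ⦃c d : C⦄, (c ⟶ d) → F.obj d //
    (∀ ⦃c d : C⦄ (α : c ⟶ d), a α ∈ S d) ∧
    ∀ ⦃b c d : C⦄ (β : b ⟶ c) (α : c ⟶ d), a (β ≫ α) = a α * F.map α (a β)}

/-- Two `S`-valued 1-cocycles are equivalent if they differ by the action of `∏_c S(c)`. -/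
def subCocycleEquiv (F : C ⥤ GrpCat.{u}) (S : ∀ c : C, Subgroup (F.obj c))
    (a a' : SubCocycle F S) : Prop :=
  ∃ x : ∀ c : C, F.obj c, (∀ c : C, x c ∈ S c) ∧
    ∀ ⦃c d : C⦄ (α : c ⟶ d), a'.1 α = (x d)⁻¹ * a.1 α * F.map α (x c)

/-- The pointed set `Lim¹ G = Z¹(C,G)/∏_c G(c)` for the subfunctor `G` given by `S`. -/
def Lim1S (F : C ⥤ GrpCat.{u}) (S : ∀ c : C, Subgroup (F.obj c)) : Type u :=
  Quot (subCocycleEquiv F S)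

/-- The trivial `S`-valued 1-cocycle. -/
def oneSubCocycle (F : C ⥤ GrpCat.{u}) (S : ∀ c : C, Subgroup (F.obj c)) : SubCocycle F S :=
  ⟨fun _ _ _ => 1, ⟨fun _ _ _ => one_mem _, by intros; simp⟩⟩

/-- The connecting 1-cocycle `d(x̄)(α) = x̄(cod α)⁻¹ · F(α)(x̄(dom α))` associated to a
family `x̄` representing an element of `Lim (F/G)`. -/
def deltaCocycle (F : C ⥤ GrpCat.{u}) (S : ∀ c : C, Subgroup (F.obj c))
    (x : ∀ c : C, F.obj c)
    (hx : ∀ ⦃c d : C⦄ (α : c ⟶ d), (x d)⁻¹ * F.map α (x c) ∈ S d) :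
    SubCocycle F S :=
  ⟨fun c d α => (x d)⁻¹ * F.map α (x c), ⟨hx, by
    intro b c d β α
    simp only []
    rw [F.map_comp]
    simp [mul_assoc]⟩⟩

/-!
Twisting the connecting cocycle of a family `x̄` by `s ∈ ∏ F(c)` gives the connecting cocycle
of `x̄ * s`. Hence `δ x̄` is trivial in `Lim¹ G` iff `x̄ * s` is compatible for some
`s ∈ ∏ G(c)`, i.e. `x̄` lifts to `Lim F`; and a `G`-cocycle is trivial in `Lim¹ F` iff it is the
connecting cocycle of some family in `∏ F(c)`. At `Lim G` and `Lim F` both maps are inclusions.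
-/

section Coboundary

variable (F : C ⥤ GrpCat.{u})

def coboundary (x : ∀ c : C, F.obj c) ⦃c d : C⦄ (α : c ⟶ d) : F.obj d :=
  (x d)⁻¹ * F.map α (x c)

variable {F}

lemma coboundary_mul (x s : ∀ c : C, F.obj c) ⦃c d : C⦄ (α : c ⟶ d) :
    coboundary F (x * s) α = (s d)⁻¹ * coboundary F x α * F.map α (s c) := by
  simp only [coboundary, Pi.mul_apply, map_mul, mul_inv_rev, mul_assoc]

lemma coboundary_eq_one_iff (x : ∀ c : C, F.obj c) ⦃c d : C⦄ (α : c ⟶ d) :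
    coboundary F x α = 1 ↔ x d = F.map α (x c) := by
  rw [coboundary, inv_mul_eq_one]

lemma deltaCocycle_apply (S : ∀ c : C, Subgroup (F.obj c)) (x : ∀ c : C, F.obj c)
    (hx : ∀ ⦃c d : C⦄ (α : c ⟶ d), (x d)⁻¹ * F.map α (x c) ∈ S d) ⦃c d : C⦄ (α : c ⟶ d) :
    (deltaCocycle F S x hx).1 α = coboundary F x α :=
  rfl

end Coboundary

section Quotients

variable (F : C ⥤ GrpCat.{u}) (S : ∀ c : C, Subgroup (F.obj c))

lemma cocycleEquiv_equivalence : Equivalence (cocycleEquiv F) where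
  refl _ := ⟨1, fun _ _ _ => by simp⟩
  symm := by
    rintro a a' ⟨x, hx⟩
    exact ⟨x⁻¹, fun c d α => by simp [hx α, mul_assoc]⟩
  trans := by
    rintro a a' a'' ⟨x, hx⟩ ⟨y, hy⟩
    exact ⟨x * y, fun c d α => by simp [hy α, hx α, mul_assoc]⟩

lemma subCocycleEquiv_equivalence : Equivalence (subCocycleEquiv F S) where
  refl _ := ⟨1, fun _ => one_mem _, fun _ _ _ => by simp⟩
  symm := by
    rintro a a' ⟨x, hxS, hx⟩
    exact ⟨x⁻¹, fun c => inv_mem (hxS c), fun c d α => by simp [hx α, mul_assoc]⟩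
  trans := by
    rintro a a' a'' ⟨x, hxS, hx⟩ ⟨y, hyS, hy⟩
    exact ⟨x * y, fun c => mul_mem (hxS c) (hyS c),
      fun c d α => by simp [hy α, hx α, mul_assoc]⟩

variable {F S}

lemma mk_eq_mk_iff_cocycleEquiv (a b : Cocycle F) :
    Quot.mk (cocycleEquiv F) a = Quot.mk _ b ↔ cocycleEquiv F a b :=
  Quot.eq.trans (cocycleEquiv_equivalence F).eqvGen_iff

lemma mk_eq_mk_iff_subCocycleEquiv (a b : SubCocycle F S) :
    Quot.mk (subCocycleEquiv F S) a = Quot.mk _ b ↔ subCocycleEquiv F S a b :=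
  Quot.eq.trans (subCocycleEquiv_equivalence F S).eqvGen_iff

end Quotients

section Connecting

variable {F : C ⥤ GrpCat.{u}} {S : ∀ c : C, Subgroup (F.obj c)}

lemma cocycleEquiv_one_iff (a : Cocycle F) :
    cocycleEquiv F a (oneCocycle F) ↔
      ∃ x : ∀ c : C, F.obj c, ∀ ⦃c d : C⦄ (α : c ⟶ d), a.1 α = coboundary F x α := by
  have key : ∀ (x : ∀ c : C, F.obj c) ⦃c d : C⦄ (α : c ⟶ d),
      (1 : F.obj d) = (x d)⁻¹ * a.1 α * F.map α (x c) ↔ a.1 α = coboundary F x⁻¹ α := by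
    intro x c d α
    simp only [coboundary, Pi.inv_apply, inv_inv, map_inv, eq_comm (a := (1 : F.obj d))]
    rw [mul_assoc, inv_mul_eq_one, eq_mul_inv_iff_mul_eq, eq_comm]
  constructor
  · rintro ⟨x, hx⟩
    exact ⟨x⁻¹, fun c d α => (key x α).1 (hx α)⟩
  · rintro ⟨x, hx⟩
    refine ⟨x⁻¹, fun c d α => (key x⁻¹ α).2 ?_⟩
    rw [inv_inv]
    exact hx α

lemma subCocycleEquiv_deltaCocycle_iff (x : ∀ c : C, F.obj c)
    (hx : ∀ ⦃c d : C⦄ (α : c ⟶ d), (x d)⁻¹ * F.map α (x c) ∈ S d) (b : SubCocycle F S) :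
    subCocycleEquiv F S (deltaCocycle F S x hx) b ↔
      ∃ s : ∀ c : C, F.obj c, (∀ c : C, s c ∈ S c) ∧
        ∀ ⦃c d : C⦄ (α : c ⟶ d), b.1 α = coboundary F (x * s) α := by
  simp only [subCocycleEquiv, deltaCocycle_apply, coboundary_mul]

lemma mk_deltaCocycle_eq_one_iff (x : ∀ c : C, F.obj c)
    (hx : ∀ ⦃c d : C⦄ (α : c ⟶ d), (x d)⁻¹ * F.map α (x c) ∈ S d) :
    Quot.mk (subCocycleEquiv F S) (deltaCocycle F S x hx) = Quot.mk _ (oneSubCocycle F S) ↔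
      ∃ y : ∀ c : C, F.obj c, (∀ ⦃c d : C⦄ (α : c ⟶ d), y d = F.map α (y c)) ∧
        ∀ c : C, (x c)⁻¹ * y c ∈ S c := by
  rw [mk_eq_mk_iff_subCocycleEquiv, subCocycleEquiv_deltaCocycle_iff]
  constructor
  · rintro ⟨s, hsS, hs⟩
    exact ⟨x * s, fun c d α => (coboundary_eq_one_iff _ α).1 (hs α).symm,
      fun c => by simpa using hsS c⟩
  · rintro ⟨y, hy, hyS⟩
    refine ⟨x⁻¹ * y, hyS, fun c d α => ?_⟩
    rw [mul_inv_cancel_left]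
    exact ((coboundary_eq_one_iff y α).2 (hy α)).symm

lemma mk_cocycle_eq_one_iff_exists_deltaCocycle (a : SubCocycle F S) :
    Quot.mk (cocycleEquiv F) ⟨a.1, a.2.2⟩ = Quot.mk _ (oneCocycle F) ↔
      ∃ (x : ∀ c : C, F.obj c)
        (hx : ∀ ⦃c d : C⦄ (α : c ⟶ d), (x d)⁻¹ * F.map α (x c) ∈ S d),
        Quot.mk (subCocycleEquiv F S) (deltaCocycle F S x hx) = Quot.mk _ a := by
  refine (mk_eq_mk_iff_cocycleEquiv _ _).trans ((cocycleEquiv_one_iff _).trans ?_)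
  constructor
  · rintro ⟨x, hx⟩
    have hax : ∀ ⦃c d : C⦄ (α : c ⟶ d), a.1 α = coboundary F x α := hx
    exact ⟨x, fun c d α => show coboundary F x α ∈ S d from hax α ▸ a.2.1 α,
      congrArg _ (Subtype.ext (by ext c d α; exact (hax α).symm))⟩
  · rintro ⟨x, hx, hxa⟩
    obtain ⟨s, -, hs⟩ := (subCocycleEquiv_deltaCocycle_iff x hx a).1
      ((mk_eq_mk_iff_subCocycleEquiv _ _).1 hxa)
    exact ⟨x * s, hs⟩

end Connecting

theorem five_term_exact_general (F : C ⥤ GrpCat.{u}) (S : ∀ c : C, Subgroup (F.obj c)) :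
    -- exactness at `Lim G`: the map `Lim G → Lim F` is injective
    Function.Injective
      (fun x : {x : ∀ c : C, F.obj c //
          (∀ c : C, x c ∈ S c) ∧ ∀ ⦃c d : C⦄ (α : c ⟶ d), x d = F.map α (x c)} =>
        (⟨x.1, x.2.2⟩ : {x : ∀ c : C, F.obj c //
          ∀ ⦃c d : C⦄ (α : c ⟶ d), x d = F.map α (x c)})) ∧
    -- exactness at `Lim F`: `x ∈ Lim F` maps to the basepoint of `Lim (F/G)`
    -- iff it comes from `Lim G`
    (∀ x : ∀ c : C, F.obj c, (∀ ⦃c d : C⦄ (α : c ⟶ d), x d = F.map α (x c)) →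
      ((∀ c : C, x c ∈ S c) ↔
        ∃ y : ∀ c : C, F.obj c,
          ((∀ c : C, y c ∈ S c) ∧ ∀ ⦃c d : C⦄ (α : c ⟶ d), y d = F.map α (y c)) ∧
          y = x)) ∧
    -- exactness at `Lim (F/G)`: an element of `Lim (F/G)`, represented by a family `x`
    -- compatible modulo `S`, maps to the basepoint of `Lim¹ G` under `δ` iff it is the
    -- image of an element of `Lim F`
    (∀ (x : ∀ c : C, F.obj c)
        (hx : ∀ ⦃c d : C⦄ (α : c ⟶ d), (x d)⁻¹ * F.map α (x c) ∈ S d),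
      Quot.mk (subCocycleEquiv F S) (deltaCocycle F S x hx) =
          Quot.mk (subCocycleEquiv F S) (oneSubCocycle F S) ↔
        ∃ y : ∀ c : C, F.obj c, (∀ ⦃c d : C⦄ (α : c ⟶ d), y d = F.map α (y c)) ∧
          ∀ c : C, (x c)⁻¹ * y c ∈ S c) ∧
    -- exactness at `Lim¹ G`: a class in `Lim¹ G` maps to the basepoint of `Lim¹ F`
    -- iff it is in the image of `δ`
    ∀ a : SubCocycle F S,
      Quot.mk (cocycleEquiv F) ⟨a.1, a.2.2⟩ = Quot.mk (cocycleEquiv F) (oneCocycle F) ↔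
        ∃ (x : ∀ c : C, F.obj c)
          (hx : ∀ ⦃c d : C⦄ (α : c ⟶ d), (x d)⁻¹ * F.map α (x c) ∈ S d),
          Quot.mk (subCocycleEquiv F S) (deltaCocycle F S x hx) =
            Quot.mk (subCocycleEquiv F S) a := by
  refine ⟨fun x y h => Subtype.ext (Subtype.mk.inj h),
    fun x hx => ⟨fun hxS => ⟨x, ⟨hxS, hx⟩, rfl⟩, fun ⟨y, ⟨hyS, _⟩, hyx⟩ => hyx ▸ hyS⟩,
    mk_deltaCocycle_eq_one_iff, mk_cocycle_eq_one_iff_exists_deltaCocycle⟩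

/-- For a subfunctor `G ⊆ F` (given by subgroups `S c ≤ F(c)`), the sequence of pointed sets
`1 → Lim G → Lim F → Lim(F/G) → Lim¹ G → Lim¹ F` is exact. -/
theorem five_term_exact (F : C ⥤ GrpCat.{u}) (S : ∀ c : C, Subgroup (F.obj c))
    (hS : ∀ ⦃c d : C⦄ (α : c ⟶ d), ∀ g ∈ S c, F.map α g ∈ S d) :
    -- exactness at `Lim G`: the map `Lim G → Lim F` is injective
    Function.Injective
      (fun x : {x : ∀ c : C, F.obj c //
          (∀ c : C, x c ∈ S c) ∧ ∀ ⦃c d : C⦄ (α : c ⟶ d), x d = F.map α (x c)} =>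
        (⟨x.1, x.2.2⟩ : {x : ∀ c : C, F.obj c //
          ∀ ⦃c d : C⦄ (α : c ⟶ d), x d = F.map α (x c)})) ∧
    -- exactness at `Lim F`: `x ∈ Lim F` maps to the basepoint of `Lim (F/G)`
    -- iff it comes from `Lim G`
    (∀ x : ∀ c : C, F.obj c, (∀ ⦃c d : C⦄ (α : c ⟶ d), x d = F.map α (x c)) →
      ((∀ c : C, x c ∈ S c) ↔
        ∃ y : ∀ c : C, F.obj c,
          ((∀ c : C, y c ∈ S c) ∧ ∀ ⦃c d : C⦄ (α : c ⟶ d), y d = F.map α (y c)) ∧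
          y = x)) ∧
    -- exactness at `Lim (F/G)`: an element of `Lim (F/G)`, represented by a family `x`
    -- compatible modulo `S`, maps to the basepoint of `Lim¹ G` under `δ` iff it is the
    -- image of an element of `Lim F`
    (∀ (x : ∀ c : C, F.obj c)
        (hx : ∀ ⦃c d : C⦄ (α : c ⟶ d), (x d)⁻¹ * F.map α (x c) ∈ S d),
      Quot.mk (subCocycleEquiv F S) (deltaCocycle F S x hx) =
          Quot.mk (subCocycleEquiv F S) (oneSubCocycle F S) ↔
        ∃ y : ∀ c : C, F.obj c, (∀ ⦃c d : C⦄ (α : c ⟶ d), y d = F.map α (y c)) ∧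
          ∀ c : C, (x c)⁻¹ * y c ∈ S c) ∧
    -- exactness at `Lim¹ G`: a class in `Lim¹ G` maps to the basepoint of `Lim¹ F`
    -- iff it is in the image of `δ`
    ∀ a : SubCocycle F S,
      Quot.mk (cocycleEquiv F) ⟨a.1, a.2.2⟩ = Quot.mk (cocycleEquiv F) (oneCocycle F) ↔
        ∃ (x : ∀ c : C, F.obj c)
          (hx : ∀ ⦃c d : C⦄ (α : c ⟶ d), (x d)⁻¹ * F.map α (x c) ∈ S d),
          Quot.mk (subCocycleEquiv F S) (deltaCocycle F S x hx) =
            Quot.mk (subCocycleEquiv F S) a :=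
  five_term_exact_general F S
end
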